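/- arXiv:1603.00246 — 7 statements merged into one kernel-verified Lean document; each statement's English description precedes it below -/
import Mathlib

section
/- The 2-homogeneous polynomial P : ℓ₂ → ℝ, P(x) = Σ_{j=1}^∞ x_j², cannot be approximated uniformly on the closed unit ball of ℓ₂ by finite type 2-homogeneous polynomials; in fact, for every finite type 2-homogeneous polynomial q(x) = Σ_{i=1}^k c_i φ_i(x)² (with φ_i continuous linear functionals on ℓ₂ and c_i ∈ ℝ) one has sup_{‖x‖ ≤ 1} |P(x) − q(x)| ≥ 1. -/
private lemma tsum_sq_eq_norm_sq (f : lp (fun _ : ℕ => ℝ) 2) :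
    ∑' j : ℕ, (f j) ^ 2 = ‖f‖ ^ 2 := by
  have h := lp.norm_rpow_eq_tsum (p := 2) (by norm_num) f
  rw [show ((2 : ENNReal).toReal = ((2:ℕ):ℝ)) by norm_num] at h
  simp only [Real.rpow_natCast, Real.norm_eq_abs, sq_abs] at h
  exact h.symm

/-- The 2-homogeneous polynomial `P : ℓ₂ → ℝ`, `P(x) = ∑ xⱼ²`, is uniformly distant at least 1
(on the closed unit ball) from every finite type 2-homogeneous polynomial
`q(x) = ∑ i, cᵢ · φᵢ(x)²`. -/
theorem squares_sum_polynomial_far_from_finite_type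
    (k : ℕ) (c : Fin k → ℝ)
    (φ : Fin k → (lp (fun _ : ℕ => ℝ) 2 →L[ℝ] ℝ)) :
    1 ≤ ⨆ x : Metric.closedBall (0 : lp (fun _ : ℕ => ℝ) 2) 1,
      |(∑' j : ℕ, (x.1 j) ^ 2) - ∑ i, c i * (φ i x.1) ^ 2| := by
  set e : Fin (k+1) → lp (fun _ : ℕ => ℝ) 2 := fun n => lp.single 2 (n : ℕ) 1 with he
  set M : Matrix (Fin k) (Fin (k+1)) ℝ := fun i n => φ i (e n) with hM
  -- nonzero kernel vector
  obtain ⟨a, ha0, haM⟩ : ∃ a : Fin (k+1) → ℝ, a ≠ 0 ∧ M.mulVec a = 0 := by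
    have h : LinearMap.ker M.mulVecLin ≠ ⊥ := by
      intro hker
      have hinj : Function.Injective M.mulVecLin := LinearMap.ker_eq_bot.mp hker
      have := LinearMap.finrank_le_finrank_of_injective hinj
      simp [Module.finrank_pi] at this
    obtain ⟨a, ha, ha0⟩ := Submodule.exists_mem_ne_zero_of_ne_bot h
    exact ⟨a, ha0, ha⟩
  set w : lp (fun _ : ℕ => ℝ) 2 := ∑ n, a n • e n with hw
  -- w is nonzero
  have hwcoord : ∀ n0 : Fin (k+1), w ((n0 : ℕ)) = a n0 := by
    intro n0
    have : w ((n0 : ℕ)) = ∑ n, a n * (e n) ((n0:ℕ)) := by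
      rw [hw, lp.coeFn_sum, Finset.sum_apply]
      simp
    rw [this, Finset.sum_eq_single n0]
    · simp [he, lp.single_apply_self]
    · intro n _ hn
      have : ((n0:ℕ)) ≠ (n:ℕ) := by
        simpa [Fin.val_inj] using (Ne.symm hn)
      simp [he, lp.single_apply_ne _ _ _ this, Pi.single_apply, this]
    · simp
  have hwne : w ≠ 0 := by
    obtain ⟨n0, hn0⟩ := Function.ne_iff.mp ha0
    intro hcon
    apply hn0
    have := hwcoord n0
    rw [hcon] at this
    simpa using this.symm
  have hwnorm : (0:ℝ) < ‖w‖ := norm_pos_iff.mpr hwne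
  -- φ i w = 0
  have hφw : ∀ i, φ i w = 0 := by
    intro i
    have : φ i w = ∑ n, a n * φ i (e n) := by
      simp [hw, map_sum, mul_comm]
    rw [this]
    have := congrFun haM i
    simpa [Matrix.mulVec, dotProduct, hM, mul_comm] using this
  set v : lp (fun _ : ℕ => ℝ) 2 := ‖w‖⁻¹ • w with hv
  have hvnorm : ‖v‖ = 1 := by
    simp [hv, norm_smul, abs_of_pos (inv_pos.mpr hwnorm), inv_mul_cancel₀ hwnorm.ne']
  have hvmem : v ∈ Metric.closedBall (0 : lp (fun _ : ℕ => ℝ) 2) 1 := by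
    simp [Metric.mem_closedBall, hvnorm]
  have hφv : ∀ i, φ i v = 0 := by
    intro i; simp [hv, hφw i]
  -- the value at v is 1
  have hval : |(∑' j : ℕ, (v j) ^ 2) - ∑ i, c i * (φ i v) ^ 2| = 1 := by
    rw [tsum_sq_eq_norm_sq, hvnorm]
    simp [hφv]
  -- bounded above
  have hbdd : BddAbove (Set.range fun x : Metric.closedBall (0 : lp (fun _ : ℕ => ℝ) 2) 1 =>
      |(∑' j : ℕ, (x.1 j) ^ 2) - ∑ i, c i * (φ i x.1) ^ 2|) := by
    refine ⟨1 + ∑ i, |c i| * ‖φ i‖ ^ 2, ?_⟩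
    rintro y ⟨⟨x, hx⟩, rfl⟩
    have hxn : ‖x‖ ≤ 1 := by simpa [Metric.mem_closedBall] using hx
    have h1 : |∑' j : ℕ, (x j) ^ 2| ≤ 1 := by
      rw [tsum_sq_eq_norm_sq, abs_of_nonneg (by positivity)]
      nlinarith [norm_nonneg x]
    have h2 : |∑ i, c i * (φ i x) ^ 2| ≤ ∑ i, |c i| * ‖φ i‖ ^ 2 := by
      refine (Finset.abs_sum_le_sum_abs _ _).trans (Finset.sum_le_sum fun i _ => ?_)
      rw [abs_mul, abs_pow, sq_abs]
      have hb : |φ i x| ≤ ‖φ i‖ := by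
        calc |φ i x| ≤ ‖φ i‖ * ‖x‖ := (φ i).le_opNorm x
        _ ≤ ‖φ i‖ * 1 := by gcongr
        _ = ‖φ i‖ := mul_one _
      have : (φ i x)^2 ≤ ‖φ i‖^2 := by
        calc (φ i x)^2 = |φ i x|^2 := (sq_abs _).symm
          _ ≤ ‖φ i‖^2 := pow_le_pow_left₀ (abs_nonneg _) hb 2
      exact mul_le_mul_of_nonneg_left this (abs_nonneg _)
    calc |(∑' j : ℕ, (x j) ^ 2) - ∑ i, c i * (φ i x) ^ 2|
        ≤ |∑' j : ℕ, (x j) ^ 2| + |∑ i, c i * (φ i x) ^ 2| := abs_sub _ _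
      _ ≤ 1 + ∑ i, |c i| * ‖φ i‖ ^ 2 := add_le_add h1 h2
  calc (1:ℝ) = |(∑' j : ℕ, (v j) ^ 2) - ∑ i, c i * (φ i v) ^ 2| := hval.symm
    _ ≤ _ := le_ciSup hbdd ⟨v, hvmem⟩
end

section
/- The 2-homogeneous polynomial P : ℓ₂ → ℝ, P(x) = Σ_{j=1}^∞ x_j², is not nuclear: there do not exist a summable sequence of scalars (λ_j)_{j=1}^∞ ∈ ℓ₁ and a norm-bounded sequence (φ_j)_{j=1}^∞ of continuous linear functionals on ℓ₂ such that P(x) = Σ_{j=1}^∞ λ_j φ_j(x)² for every x ∈ ℓ₂. -/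
open scoped ENNReal NNReal

noncomputable def e (n : ℕ) : lp (fun _ : ℕ => ℝ) 2 := lp.single 2 n (1:ℝ)

lemma e_apply (n j : ℕ) : (e n) j = if j = n then 1 else 0 := by
  simp [e, lp.single_apply, Pi.single_apply]

lemma norm_e (n : ℕ) : ‖e n‖ = 1 := by
  have := lp.norm_single (E := fun _ : ℕ => ℝ) (p := (2:ℝ≥0∞)) (by norm_num) n (1:ℝ)
  simpa [e] using this

lemma tsum_e_sq (n : ℕ) : ∑' j : ℕ, ((e n) j)^2 = 1 := by
  rw [tsum_eq_single n]
  · simp [e_apply]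
  · intro j hj; simp [e_apply, hj]

lemma key (φ : lp (fun _ : ℕ => ℝ) 2 →L[ℝ] ℝ) (s : Finset ℕ) :
    ∑ n ∈ s, (φ (e n))^2 ≤ ‖φ‖^2 := by
  set c : ℕ → ℝ := fun n => φ (e n) with hc
  set x : lp (fun _ : ℕ => ℝ) 2 := ∑ n ∈ s, lp.single 2 n (c n) with hx
  have hnorm : ‖x‖^2 = ∑ n ∈ s, (c n)^2 := by
    have h2 := lp.norm_sum_single (p := (2:ℝ≥0∞)) (by norm_num) c s
    simp only [ENNReal.toReal_ofNat, Real.rpow_two, Real.norm_eq_abs, sq_abs] at h2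
    rw [hx, h2]
  have hphix : φ x = ∑ n ∈ s, (c n)^2 := by
    rw [hx, map_sum]
    congr 1; ext n
    have : lp.single (E := fun _ : ℕ => ℝ) 2 n (c n) = c n • e n := by
      rw [e, ← lp.single_smul]; norm_num
    rw [this, map_smul]
    simp [hc, sq]
  set T := ∑ n ∈ s, (c n)^2 with hT
  have hT0 : 0 ≤ T := Finset.sum_nonneg fun n _ => sq_nonneg _
  have hle : T ≤ ‖φ‖ * ‖x‖ := by
    rw [← hphix]
    exact (le_abs_self _).trans ((Real.norm_eq_abs _) ▸ φ.le_opNorm x)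
  have hxn : ‖x‖ = Real.sqrt T := by
    rw [← Real.sqrt_sq (norm_nonneg x), hnorm]
  rcases eq_or_lt_of_le hT0 with h0 | h0
  · calc ∑ n ∈ s, (c n)^2 = T := rfl
      _ = 0 := h0.symm
      _ ≤ ‖φ‖^2 := sq_nonneg _
  · have hsq : Real.sqrt T ≤ ‖φ‖ := by
      have h1 : Real.sqrt T * Real.sqrt T ≤ ‖φ‖ * Real.sqrt T := by
        rw [Real.mul_self_sqrt hT0]
        rw [hxn] at hle; linarith
      exact le_of_mul_le_mul_right h1 (Real.sqrt_pos.mpr h0)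
    calc T = Real.sqrt T ^ 2 := by rw [Real.sq_sqrt hT0]
      _ ≤ ‖φ‖^2 := by apply pow_le_pow_left₀ (Real.sqrt_nonneg _) hsq
/-- The 2-homogeneous polynomial `P : ℓ₂ → ℝ`, `P(x) = ∑ xⱼ²`, is not nuclear: there is no
summable sequence of scalars `(λⱼ)` and norm-bounded sequence `(φⱼ)` of continuous linear
functionals on `ℓ₂` with `∑' j, xⱼ² = ∑' j, λⱼ · φⱼ(x)²` for every `x ∈ ℓ₂`. -/
theorem squares_sum_polynomial_not_nuclear :
    ¬ ∃ (lam : ℕ → ℝ) (φ : ℕ → (lp (fun _ : ℕ => ℝ) 2 →L[ℝ] ℝ)),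
      Summable (fun j : ℕ => |lam j|) ∧
      (∃ M : ℝ, ∀ j : ℕ, ‖φ j‖ ≤ M) ∧
      ∀ x : lp (fun _ : ℕ => ℝ) 2,
        (∑' j : ℕ, (x j) ^ 2) = ∑' j : ℕ, lam j * (φ j x) ^ 2 := by
  rintro ⟨lam, φ, hsum, ⟨M, hM⟩, hrep⟩
  have hM0 : 0 ≤ M := (norm_nonneg (φ 0)).trans (hM 0)
  -- each evaluation at basis vector gives 1
  have h1 : ∀ n : ℕ, (1:ℝ) = ∑' j : ℕ, lam j * (φ j (e n))^2 := fun n => by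
    rw [← tsum_e_sq n]; exact hrep (e n)
  -- pointwise summability
  have hbound : ∀ n j : ℕ, |lam j * (φ j (e n))^2| ≤ |lam j| * M^2 := by
    intro n j
    rw [abs_mul, abs_sq]
    apply mul_le_mul_of_nonneg_left _ (abs_nonneg _)
    have h := key (φ j) {n}
    simp only [Finset.sum_singleton] at h
    exact h.trans (pow_le_pow_left₀ (norm_nonneg _) (hM j) 2)
  have hRsum : Summable (fun j => |lam j| * M^2) := hsum.mul_right _
  have hsummable : ∀ n : ℕ, Summable (fun j => lam j * (φ j (e n))^2) := fun n =>
    (hRsum.of_nonneg_of_le (fun j => abs_nonneg _) (hbound n)).of_abs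
  set L := ∑' j, |lam j| with hL
  obtain ⟨N, hN⟩ := exists_nat_gt (M^2 * L)
  -- sum the identity over n < N
  have hNsum : (N : ℝ) = ∑' j : ℕ, lam j * ∑ n ∈ Finset.range N, (φ j (e n))^2 := by
    calc (N : ℝ) = ∑ n ∈ Finset.range N, (1:ℝ) := by simp
      _ = ∑ n ∈ Finset.range N, ∑' j : ℕ, lam j * (φ j (e n))^2 :=
        Finset.sum_congr rfl fun n _ => h1 n
      _ = ∑' j : ℕ, ∑ n ∈ Finset.range N, lam j * (φ j (e n))^2 :=
        (Summable.tsum_finsetSum fun n _ => hsummable n).symm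
      _ = ∑' j : ℕ, lam j * ∑ n ∈ Finset.range N, (φ j (e n))^2 := by
        congr 1; ext j; rw [Finset.mul_sum]
  -- bound the right side
  have hterm : ∀ j : ℕ, lam j * ∑ n ∈ Finset.range N, (φ j (e n))^2 ≤ |lam j| * M^2 := by
    intro j
    have hS0 : 0 ≤ ∑ n ∈ Finset.range N, (φ j (e n))^2 :=
      Finset.sum_nonneg fun n _ => sq_nonneg _
    have hSM : ∑ n ∈ Finset.range N, (φ j (e n))^2 ≤ M^2 :=
      (key (φ j) _).trans (pow_le_pow_left₀ (norm_nonneg _) (hM j) 2)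
    calc lam j * ∑ n ∈ Finset.range N, (φ j (e n))^2
        ≤ |lam j| * ∑ n ∈ Finset.range N, (φ j (e n))^2 :=
          mul_le_mul_of_nonneg_right (le_abs_self _) hS0
      _ ≤ |lam j| * M^2 := mul_le_mul_of_nonneg_left hSM (abs_nonneg _)
  have hLsummable : Summable (fun j => lam j * ∑ n ∈ Finset.range N, (φ j (e n))^2) := by
    have : (fun j => lam j * ∑ n ∈ Finset.range N, (φ j (e n))^2) =
        fun j => ∑ n ∈ Finset.range N, lam j * (φ j (e n))^2 := by
      ext j; rw [Finset.mul_sum]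
    rw [this]
    exact summable_sum fun n _ => hsummable n
  have hfinal : (N : ℝ) ≤ M^2 * L := by
    rw [hNsum]
    calc ∑' j : ℕ, lam j * ∑ n ∈ Finset.range N, (φ j (e n))^2
        ≤ ∑' j : ℕ, |lam j| * M^2 := Summable.tsum_le_tsum hterm hLsummable hRsum
      _ = M^2 * L := by rw [hL, tsum_mul_right, mul_comm]
  linarith
end

section
/- Let E, F, G, H be Banach spaces over 𝕜, let Q : G → E be a continuous m-homogeneous polynomial, let P : E → F be a continuous n-homogeneous polynomial, and let t : F → H be a continuous linear operator. If P is weakly compact, i.e. P maps the closed unit ball of E onto a relatively weakly compact subset of F, then t ∘ P ∘ Q is a weakly compact (mn)-homogeneous polynomial, i.e. t ∘ P ∘ Q maps the closed unit ball of G onto a relatively weakly compact subset of H. (The class of weakly compact homogeneous polynomials satisfies the hyper-ideal property.) -/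
/-- **Hyper-ideal property of weakly compact polynomials.**
Let `Q(x) = B(x, …, x)` and `P(x) = A(x, …, x)` be continuous homogeneous polynomials of
degrees `m` and `n` between Banach spaces `G → E` and `E → F`, and let `t : F → H` be a
continuous linear operator. If `P` is weakly compact (the image of the closed unit ball
of `E` is relatively compact in the weak topology of `F`), then `t ∘ P ∘ Q` is a weakly
compact `(m·n)`-homogeneous polynomial. -/
theorem weakly_compact_polynomials_hyper_ideal
    {𝕜 : Type*} [RCLike 𝕜] {E F G H : Type*}
    [NormedAddCommGroup E] [NormedSpace 𝕜 E] [CompleteSpace E]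
    [NormedAddCommGroup F] [NormedSpace 𝕜 F] [CompleteSpace F]
    [NormedAddCommGroup G] [NormedSpace 𝕜 G] [CompleteSpace G]
    [NormedAddCommGroup H] [NormedSpace 𝕜 H] [CompleteSpace H]
    (m n : ℕ)
    (B : ContinuousMultilinearMap 𝕜 (fun _ : Fin m => G) E)
    (A : ContinuousMultilinearMap 𝕜 (fun _ : Fin n => E) F)
    (t : F →L[𝕜] H)
    (hA : IsCompact (closure
      (toWeakSpace 𝕜 F '' ((fun x : E => A fun _ => x) '' Metric.closedBall (0 : E) 1)))) :
    IsCompact (closure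
      (toWeakSpace 𝕜 H ''
        ((fun x : G => t (A fun _ => B fun _ => x)) '' Metric.closedBall (0 : G) 1))) := by
  set r : ℝ := max ‖B‖ 1 with hr
  have hr1 : (1 : ℝ) ≤ r := le_max_right _ _
  have hr0 : (0 : ℝ) < r := lt_of_lt_of_le one_pos hr1
  set c : 𝕜 := (r : 𝕜) with hc
  have hc0 : c ≠ 0 := by
    simp [hc]
    exact_mod_cast hr0.ne'
  have hcn : ‖c‖ = r := by
    rw [hc, RCLike.norm_ofReal, abs_of_pos hr0]
  -- the continuous map on weak spaces
  set g : WeakSpace 𝕜 F →L[𝕜] WeakSpace 𝕜 H := WeakSpace.map ((c ^ n) • t) with hg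
  set K : Set (WeakSpace 𝕜 F) := closure
      (toWeakSpace 𝕜 F '' ((fun x : E => A fun _ => x) '' Metric.closedBall (0 : E) 1)) with hK
  have hgK : IsCompact (g '' K) := hA.image g.continuous
  have hsub : (toWeakSpace 𝕜 H ''
      ((fun x : G => t (A fun _ => B fun _ => x)) '' Metric.closedBall (0 : G) 1)) ⊆ g '' K := by
    rintro _ ⟨_, ⟨x, hx, rfl⟩, rfl⟩
    set u : E := B fun _ => x with hu
    have hxu : ‖u‖ ≤ r := by
      calc ‖u‖ ≤ ‖B‖ * ∏ _i : Fin m, ‖x‖ := B.le_opNorm _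
        _ ≤ ‖B‖ * 1 := by
            refine mul_le_mul_of_nonneg_left ?_ (norm_nonneg B)
            exact Finset.prod_le_one (fun _ _ => norm_nonneg x)
                (fun _ _ => by simpa using mem_closedBall_zero_iff.mp hx)
        _ = ‖B‖ := mul_one _
        _ ≤ r := le_max_left ‖B‖ 1
    have hv : c⁻¹ • u ∈ Metric.closedBall (0 : E) 1 := by
      rw [mem_closedBall_zero_iff, norm_smul, norm_inv, hcn]
      rw [inv_mul_le_iff₀ hr0, mul_one]
      exact hxu
    have key : A (fun _ => u) = c ^ n • A (fun _ => c⁻¹ • u) := by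
      rw [A.map_smul_univ]
      simp [smul_smul, Finset.prod_const, ← mul_pow,
        mul_inv_cancel₀ (pow_ne_zero n hc0)]
    refine ⟨toWeakSpace 𝕜 F ((fun x : E => A fun _ => x) (c⁻¹ • u)),
      subset_closure ⟨_, ⟨_, hv, rfl⟩, rfl⟩, ?_⟩
    show ((c ^ n) • t) (A fun _ => c⁻¹ • u) = toWeakSpace 𝕜 H (t (A fun _ => u))
    rw [key]
    simp only [ContinuousLinearMap.smul_apply, map_smul]
    rfl
  exact (hgK.closure).of_isClosed_subset isClosed_closure
    (closure_mono hsub)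
end

section
/- Let E, F, G, H be Banach spaces over 𝕜, let Q : G → E be a continuous m-homogeneous polynomial, let P : E → F be a polynomially sequentially continuous n-homogeneous polynomial, and let R : F → H be a continuous r-homogeneous polynomial. Then R ∘ P ∘ Q : G → H is a polynomially sequentially continuous (rnm)-homogeneous polynomial. (The class of polynomially sequentially continuous polynomials satisfies the two-sided ideal property.) -/
open Function

/-- A sequence `(xₖ)` in a Banach space `E` converges polynomially to `x₀` if
`A(xₖ, …, xₖ) → A(x₀, …, x₀)` for every continuous multilinear form `A` on `E`. -/
def PolyTendsto (𝕜 : Type*) [RCLike 𝕜] {E : Type*}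
    [NormedAddCommGroup E] [NormedSpace 𝕜 E] (x : ℕ → E) (x₀ : E) : Prop :=
  ∀ (m : ℕ) (A : ContinuousMultilinearMap 𝕜 (fun _ : Fin m => E) 𝕜),
    Filter.Tendsto (fun k : ℕ => A fun _ => x k) Filter.atTop (nhds (A fun _ => x₀))

/-- A map `P : E → F` is polynomially sequentially continuous if it sends polynomially
convergent sequences to norm convergent sequences. -/
def PolySeqCont (𝕜 : Type*) [RCLike 𝕜] {E F : Type*}
    [NormedAddCommGroup E] [NormedSpace 𝕜 E]
    [NormedAddCommGroup F] [NormedSpace 𝕜 F] (P : E → F) : Prop :=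
  ∀ (x : ℕ → E) (x₀ : E), PolyTendsto 𝕜 x x₀ →
    Filter.Tendsto (fun k : ℕ => P (x k)) Filter.atTop (nhds (P x₀))


section Aux

variable {𝕜 : Type*} [RCLike 𝕜] {G E : Type*}
  [NormedAddCommGroup G] [NormedSpace 𝕜 G]
  [NormedAddCommGroup E] [NormedSpace 𝕜 E]
  {p m : ℕ}

theorem update_diag_eq [DecidableEq (Fin p × Fin m)]
    (B : ContinuousMultilinearMap 𝕜 (fun _ : Fin m => G) E)
    (g : Fin p × Fin m → G) (i : Fin p) (j : Fin m) (v : G) :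
    (fun i' : Fin p => B fun j' : Fin m => Function.update g (i, j) v (i', j')) =
      Function.update (fun i' : Fin p => B fun j' => g (i', j')) i
        (B (Function.update (fun j' => g (i, j')) j v)) := by
  funext i'
  rcases eq_or_ne i' i with rfl | h
  · rw [Function.update_self]
    congr 1
    funext j'
    rcases eq_or_ne j' j with rfl | hj
    · simp
    · rw [Function.update_apply, Function.update_apply, if_neg hj, if_neg]
      simp [Prod.ext_iff, hj]
  · rw [Function.update_of_ne h]
    congr 1
    funext j'
    rw [Function.update_apply, if_neg]
    simp [Prod.ext_iff, h]

/-- Substitution of a continuous multilinear map `B` into every slot of a continuous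
multilinear form `Φ`, as a continuous multilinear map. -/
noncomputable def substDiag
    (Φ : ContinuousMultilinearMap 𝕜 (fun _ : Fin p => E) 𝕜)
    (B : ContinuousMultilinearMap 𝕜 (fun _ : Fin m => G) E) :
    ContinuousMultilinearMap 𝕜 (fun _ : Fin p × Fin m => G) 𝕜 :=
  MultilinearMap.mkContinuous
    { toFun := fun g => Φ fun i => B fun j => g (i, j)
      map_update_add' := by
        intro dec g ij u v
        obtain ⟨i, j⟩ := ij
        show (Φ fun i' => B fun j' => update g (i, j) (u + v) (i', j')) =
          (Φ fun i' => B fun j' => update g (i, j) u (i', j')) +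
          (Φ fun i' => B fun j' => update g (i, j) v (i', j'))
        rw [update_diag_eq, update_diag_eq, update_diag_eq, B.map_update_add,
          Φ.map_update_add]
      map_update_smul' := by
        intro dec g ij c u
        obtain ⟨i, j⟩ := ij
        show (Φ fun i' => B fun j' => update g (i, j) (c • u) (i', j')) =
          c • (Φ fun i' => B fun j' => update g (i, j) u (i', j'))
        rw [update_diag_eq, update_diag_eq, B.map_update_smul, Φ.map_update_smul] }
    (‖Φ‖ * ‖B‖ ^ p)
    (by
      intro g
      calc ‖Φ fun i => B fun j => g (i, j)‖
          ≤ ‖Φ‖ * ∏ i : Fin p, ‖B fun j => g (i, j)‖ := Φ.le_opNorm _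
        _ ≤ ‖Φ‖ * ∏ i : Fin p, (‖B‖ * ∏ j : Fin m, ‖g (i, j)‖) := by
            refine mul_le_mul_of_nonneg_left ?_ (norm_nonneg Φ)
            exact Finset.prod_le_prod (fun i _ => norm_nonneg _)
              (fun i _ => B.le_opNorm _)
        _ = ‖Φ‖ * ‖B‖ ^ p * ∏ ij : Fin p × Fin m, ‖g ij‖ := by
            rw [Finset.prod_mul_distrib, Finset.prod_const, Fintype.prod_prod_type]
            simp [Finset.card_univ]
            ring)

@[simp] theorem substDiag_apply
    (Φ : ContinuousMultilinearMap 𝕜 (fun _ : Fin p => E) 𝕜)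
    (B : ContinuousMultilinearMap 𝕜 (fun _ : Fin m => G) E)
    (g : Fin p × Fin m → G) :
    substDiag Φ B g = Φ fun i => B fun j => g (i, j) := rfl

end Aux

/-- **Two-sided ideal property of polynomially sequentially continuous polynomials.**
Let `Q(x) = B(x, …, x)`, `P(x) = A(x, …, x)` and `R(x) = C(x, …, x)` be continuous
homogeneous polynomials of degrees `m`, `n`, `r` between Banach spaces `G → E`, `E → F`
and `F → H`. If `P` is polynomially sequentially continuous, then so is the
`(r·n·m)`-homogeneous polynomial `R ∘ P ∘ Q`. -/
theorem polySeqCont_two_sided_ideal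
    {𝕜 : Type*} [RCLike 𝕜] {E F G H : Type*}
    [NormedAddCommGroup E] [NormedSpace 𝕜 E] [CompleteSpace E]
    [NormedAddCommGroup F] [NormedSpace 𝕜 F] [CompleteSpace F]
    [NormedAddCommGroup G] [NormedSpace 𝕜 G] [CompleteSpace G]
    [NormedAddCommGroup H] [NormedSpace 𝕜 H] [CompleteSpace H]
    (m n r : ℕ)
    (B : ContinuousMultilinearMap 𝕜 (fun _ : Fin m => G) E)
    (A : ContinuousMultilinearMap 𝕜 (fun _ : Fin n => E) F)
    (C : ContinuousMultilinearMap 𝕜 (fun _ : Fin r => F) H)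
    (hA : PolySeqCont 𝕜 (fun x : E => A fun _ => x)) :
    PolySeqCont 𝕜 (fun x : G => C fun _ => A fun _ => B fun _ => x) := by
  intro x x₀ hx
  have hy : PolyTendsto 𝕜 (fun k => B fun _ => x k) (B fun _ => x₀) := by
    intro p Φ
    have h := hx (p * m) ((substDiag Φ B).domDomCongr finProdFinEquiv)
    have key : ∀ z : G,
        ((substDiag Φ B).domDomCongr finProdFinEquiv) (fun _ => z) =
          Φ fun _ => B fun _ => z := fun z => rfl
    simpa [key] using h
  have h2 := hA _ _ hy
  have hC : Continuous fun z : F => C fun _ => z :=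
    C.coe_continuous.comp (continuous_pi fun _ => continuous_id)
  exact (hC.tendsto _).comp h2
end

section
/- Let 0 < p < ∞, let E, F, G, H be Banach spaces over 𝕜, let P : E → F be a continuous n-homogeneous polynomial, Q : G → E a continuous m-homogeneous polynomial, and t : F → H a continuous linear operator. Suppose P is strongly p-summing with constant C, i.e. for every finite family x₁, …, x_k ∈ E one has (Σ_{j=1}^k ‖P(x_j)‖^p)^{1/p} ≤ C · sup_q (Σ_{j=1}^k |q(x_j)|^p)^{1/p}, where the supremum runs over all continuous n-homogeneous scalar-valued polynomials q : E → 𝕜 with ‖q‖ = sup_{‖x‖≤1}|q(x)| ≤ 1. Then t ∘ P ∘ Q is a strongly p-summing (mn)-homogeneous polynomial with constant ‖t‖ · C · ‖Q‖ⁿ, i.e. for every finite family x₁, …, x_k ∈ G, (Σ_{j=1}^k ‖t(P(Q(x_j)))‖^p)^{1/p} ≤ ‖t‖ · C · ‖Q‖ⁿ · sup_S (Σ_{j=1}^k |S(x_j)|^p)^{1/p}, the supremum running over all continuous (mn)-homogeneous scalar polynomials S : G → 𝕜 with ‖S‖ ≤ 1. -/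
/-- The sup norm of a (polynomial) map between normed spaces over its closed unit ball. -/
noncomputable def polyNorm {E F : Type*}
    [SeminormedAddCommGroup E] [SeminormedAddCommGroup F] (P : E → F) : ℝ :=
  ⨆ x : Metric.closedBall (0 : E) 1, ‖P x.1‖

section helpers

variable {E F : Type*} [SeminormedAddCommGroup E] [SeminormedAddCommGroup F]

theorem polyNorm_nonneg (P : E → F) : 0 ≤ polyNorm P :=
  Real.iSup_nonneg fun _ => norm_nonneg _

theorem le_polyNorm (P : E → F) (M : ℝ) (hM : ∀ x : E, ‖x‖ ≤ 1 → ‖P x‖ ≤ M)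
    (x : E) (hx : ‖x‖ ≤ 1) : ‖P x‖ ≤ polyNorm P := by
  have hb : BddAbove (Set.range fun v : Metric.closedBall (0 : E) 1 => ‖P v.1‖) := by
    refine ⟨M, ?_⟩
    rintro r ⟨v, rfl⟩
    exact hM v.1 (by simpa [dist_zero_right] using (Metric.mem_closedBall.1 v.2))
  exact le_ciSup hb (⟨x, by simpa [dist_zero_right] using hx⟩ : Metric.closedBall (0 : E) 1)

theorem polyNorm_le (P : E → F) (M : ℝ) (hM0 : 0 ≤ M)
    (h : ∀ x : E, ‖x‖ ≤ 1 → ‖P x‖ ≤ M) : polyNorm P ≤ M :=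
  Real.iSup_le
    (fun v => h v.1 (by simpa [dist_zero_right] using (Metric.mem_closedBall.1 v.2))) hM0

end helpers

section diag

variable {𝕜 : Type*} [RCLike 𝕜] {E F : Type*}
    [NormedAddCommGroup E] [NormedSpace 𝕜 E] [NormedAddCommGroup F] [NormedSpace 𝕜 F]
    {n : ℕ}

theorem diag_le_opNorm (q : ContinuousMultilinearMap 𝕜 (fun _ : Fin n => E) F) :
    ∀ v : E, ‖v‖ ≤ 1 → ‖q fun _ => v‖ ≤ ‖q‖ := by
  intro v hv
  calc ‖q fun _ => v‖ ≤ ‖q‖ * ∏ _i : Fin n, ‖v‖ := q.le_opNorm _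
    _ = ‖q‖ * ‖v‖ ^ n := by simp
    _ ≤ ‖q‖ * 1 := by
        exact mul_le_mul_of_nonneg_left (pow_le_one₀ (norm_nonneg _) hv) (norm_nonneg q)
    _ = ‖q‖ := mul_one _

theorem diag_bound (q : ContinuousMultilinearMap 𝕜 (fun _ : Fin n => E) F) (z : E) :
    ‖q fun _ => z‖ ≤ polyNorm (fun y : E => q fun _ => y) * ‖z‖ ^ n := by
  rcases Nat.eq_zero_or_pos n with hn | hn
  · subst hn
    rw [show (fun _ : Fin 0 => z) = fun _ => (0 : E) from Subsingleton.elim _ _]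
    simpa using le_polyNorm (fun y : E => q fun _ => y) ‖q‖ (diag_le_opNorm q) 0 (by simp)
  · by_cases hz : z = 0
    · subst hz
      haveI : Nonempty (Fin n) := ⟨⟨0, hn⟩⟩
      rw [show (fun _ : Fin n => (0 : E)) = 0 from rfl, q.map_zero, norm_zero]
      exact mul_nonneg (polyNorm_nonneg _) (pow_nonneg (norm_nonneg _) _)
    · have ha : (0 : ℝ) < ‖z‖ := norm_pos_iff.2 hz
      have hane : ((‖z‖ : 𝕜)) ≠ 0 := by
        simpa using (RCLike.ofReal_ne_zero (K := 𝕜)).2 ha.ne'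
      set c : 𝕜 := (‖z‖ : 𝕜)⁻¹ with hc
      have hcz : ‖c • z‖ ≤ 1 := by
        rw [norm_smul, hc, norm_inv, RCLike.norm_ofReal, abs_of_pos ha,
          inv_mul_cancel₀ ha.ne']
      have key : (q fun _ => z) = ((‖z‖ : 𝕜)) ^ n • q fun _ => c • z := by
        have h1 : (fun _ : Fin n => z) = fun i : Fin n =>
            (fun _ : Fin n => (‖z‖ : 𝕜)) i • (fun _ : Fin n => c • z) i := by
          funext i
          simp only [hc, smul_smul, mul_inv_cancel₀ hane, one_smul]
        rw [h1, q.map_smul_univ]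
        simp
      rw [key, norm_smul, norm_pow, RCLike.norm_ofReal, abs_of_pos ha, mul_comm]
      exact mul_le_mul_of_nonneg_right
        (le_polyNorm (fun y : E => q fun _ => y) ‖q‖ (diag_le_opNorm q) _ hcz)
        (pow_nonneg ha.le _)

end diag

theorem exists_comp {𝕜 E G : Type*} [RCLike 𝕜]
    [NormedAddCommGroup E] [NormedSpace 𝕜 E]
    [NormedAddCommGroup G] [NormedSpace 𝕜 G] (n m : ℕ)
    (q : ContinuousMultilinearMap 𝕜 (fun _ : Fin n => E) 𝕜)
    (B : ContinuousMultilinearMap 𝕜 (fun _ : Fin m => G) E) :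
    ∃ S : ContinuousMultilinearMap 𝕜 (fun _ : Fin (m * n) => G) 𝕜,
      ∀ y : G, (S fun _ => y) = q fun _ => B fun _ => y := by
  rcases Nat.eq_zero_or_pos m with hm | hm
  · subst hm
    haveI : IsEmpty (Fin (0 * n)) := ⟨fun i => absurd i.2 (by simp)⟩
    refine ⟨ContinuousMultilinearMap.constOfIsEmpty 𝕜 _ (q fun _ => B fun _ => (0 : G)),
      fun y => ?_⟩
    rw [show (fun _ : Fin 0 => (0 : G)) = fun _ => y from Subsingleton.elim _ _]
    rfl
  · set c : Composition (m * n) :=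
      ⟨List.replicate n m, fun hi => (List.eq_of_mem_replicate hi) ▸ hm,
        by simp [Nat.mul_comm]⟩ with hc
    have hlen : c.length = n := by simp [Composition.length, hc]
    set P : FormalMultilinearSeries 𝕜 G E :=
      fun j => if h : j = m then h.symm ▸ B else 0 with hPdef
    refine ⟨(q.domDomCongr (finCongr hlen.symm)).compAlongComposition P c, fun y => ?_⟩
    have key : ∀ (j : ℕ) (_ : j = m) (v : Fin j → G), (∀ l, v l = y) →
        P j v = B fun _ => y := by
      intro j hj v hv
      subst hj
      have hv' : v = fun _ => y := funext hv
      subst hv'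
      rw [hPdef]
      simp
    have happ : P.applyComposition c (fun _ : Fin (m * n) => y) = fun _ => B fun _ => y := by
      funext i
      have hbf : c.blocksFun i = m := by
        simp [Composition.blocksFun, hc]
      exact key _ hbf _ (fun l => rfl)
    rw [ContinuousMultilinearMap.compAlongComposition_apply, happ,
      ContinuousMultilinearMap.domDomCongr_apply]

section sset

variable {𝕜 G : Type*} [RCLike 𝕜] [NormedAddCommGroup G] [NormedSpace 𝕜 G]

theorem zero_mem_sset (p : ℝ) (hp : 0 < p) (N k : ℕ) (x : Fin k → G) :
    (0 : ℝ) ∈ {r : ℝ | ∃ S : ContinuousMultilinearMap 𝕜 (fun _ : Fin N => G) 𝕜,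
      polyNorm (fun y : G => S fun _ => y) ≤ 1 ∧
      r = (∑ j, ‖S fun _ => x j‖ ^ p) ^ (1 / p)} := by
  haveI : Nonempty (Metric.closedBall (0 : G) 1) :=
    ⟨⟨0, Metric.mem_closedBall_self zero_le_one⟩⟩
  refine ⟨0, ?_, ?_⟩
  · have h0 : polyNorm (fun y : G =>
        (0 : ContinuousMultilinearMap 𝕜 (fun _ : Fin N => G) 𝕜) fun _ => y) = 0 := by
      simp [polyNorm]
    rw [h0]; norm_num
  · simp [Real.zero_rpow hp.ne', Real.zero_rpow (inv_ne_zero hp.ne')]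

theorem bddAbove_sset (p : ℝ) (hp : 0 < p) (N k : ℕ) (x : Fin k → G) :
    BddAbove {r : ℝ | ∃ S : ContinuousMultilinearMap 𝕜 (fun _ : Fin N => G) 𝕜,
      polyNorm (fun y : G => S fun _ => y) ≤ 1 ∧
      r = (∑ j, ‖S fun _ => x j‖ ^ p) ^ (1 / p)} := by
  refine ⟨(∑ j, (‖x j‖ ^ N) ^ p) ^ (1 / p), ?_⟩
  rintro r ⟨S, hS, rfl⟩
  apply Real.rpow_le_rpow
    (Finset.sum_nonneg fun j _ => Real.rpow_nonneg (norm_nonneg _) _) ?_ (by positivity)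
  apply Finset.sum_le_sum
  intro j _
  apply Real.rpow_le_rpow (norm_nonneg _) ?_ hp.le
  calc ‖S fun _ => x j‖ ≤ polyNorm (fun y : G => S fun _ => y) * ‖x j‖ ^ N :=
        diag_bound S (x j)
    _ ≤ 1 * ‖x j‖ ^ N := mul_le_mul_of_nonneg_right hS (pow_nonneg (norm_nonneg _) _)
    _ = ‖x j‖ ^ N := one_mul _

theorem rpow_sum_factor (p : ℝ) (hp : 0 < p) (a : ℝ) (ha : 0 ≤ a) {k : ℕ}
    (f : Fin k → ℝ) (hf : ∀ j, 0 ≤ f j) :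
    (∑ j, (a * f j) ^ p) ^ (1 / p) = a * (∑ j, f j ^ p) ^ (1 / p) := by
  have h1 : ∀ j ∈ Finset.univ, (a * f j) ^ p = a ^ p * f j ^ p := fun j _ =>
    Real.mul_rpow ha (hf j)
  rw [Finset.sum_congr rfl h1, ← Finset.mul_sum,
    Real.mul_rpow (Real.rpow_nonneg ha _)
      (Finset.sum_nonneg fun j _ => Real.rpow_nonneg (hf j) _), ← Real.rpow_mul ha,
    mul_one_div_cancel hp.ne', Real.rpow_one]

end sset


/-- **Hyper-ideal property of strongly `p`-summing polynomials.**
Let `P(x) = A(x, …, x)` be a continuous `n`-homogeneous polynomial `E → F`,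
`Q(x) = B(x, …, x)` a continuous `m`-homogeneous polynomial `G → E` and `t : F → H` a
continuous linear operator. If `P` is strongly `p`-summing with constant `C`, then
`t ∘ P ∘ Q` is a strongly `p`-summing `(m·n)`-homogeneous polynomial with constant
`‖t‖ · C · ‖Q‖ⁿ`. -/
theorem strongly_p_summing_hyper_ideal
    {𝕜 : Type*} [RCLike 𝕜] {E F G H : Type*}
    [NormedAddCommGroup E] [NormedSpace 𝕜 E] [CompleteSpace E]
    [NormedAddCommGroup F] [NormedSpace 𝕜 F] [CompleteSpace F]
    [NormedAddCommGroup G] [NormedSpace 𝕜 G] [CompleteSpace G]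
    [NormedAddCommGroup H] [NormedSpace 𝕜 H] [CompleteSpace H]
    (p : ℝ) (hp : 0 < p) (n m : ℕ)
    (A : ContinuousMultilinearMap 𝕜 (fun _ : Fin n => E) F)
    (B : ContinuousMultilinearMap 𝕜 (fun _ : Fin m => G) E)
    (t : F →L[𝕜] H) (C : ℝ) (hC : 0 ≤ C)
    (hP : ∀ (k : ℕ) (x : Fin k → E),
      (∑ j, ‖A fun _ => x j‖ ^ p) ^ (1 / p) ≤
        C * sSup {r : ℝ | ∃ q : ContinuousMultilinearMap 𝕜 (fun _ : Fin n => E) 𝕜,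
          polyNorm (fun y : E => q fun _ => y) ≤ 1 ∧
          r = (∑ j, ‖q fun _ => x j‖ ^ p) ^ (1 / p)}) :
    ∀ (k : ℕ) (x : Fin k → G),
      (∑ j, ‖t (A fun _ => B fun _ => x j)‖ ^ p) ^ (1 / p) ≤
        ‖t‖ * C * polyNorm (fun y : G => B fun _ => y) ^ n *
          sSup {r : ℝ | ∃ S : ContinuousMultilinearMap 𝕜 (fun _ : Fin (m * n) => G) 𝕜,
            polyNorm (fun y : G => S fun _ => y) ≤ 1 ∧
            r = (∑ j, ‖S fun _ => x j‖ ^ p) ^ (1 / p)} := by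
  intro k x
  set QN : ℝ := polyNorm (fun y : G => B fun _ => y) with hQNdef
  have hQN0 : 0 ≤ QN := polyNorm_nonneg _
  set Sset : Set ℝ := {r : ℝ | ∃ S : ContinuousMultilinearMap 𝕜 (fun _ : Fin (m * n) => G) 𝕜,
      polyNorm (fun y : G => S fun _ => y) ≤ 1 ∧
      r = (∑ j, ‖S fun _ => x j‖ ^ p) ^ (1 / p)} with hSset
  have hSbdd : BddAbove Sset := bddAbove_sset p hp (m * n) k x
  have hSmem0 : (0 : ℝ) ∈ Sset := zero_mem_sset p hp (m * n) k x
  have hSsup0 : 0 ≤ sSup Sset := le_csSup hSbdd hSmem0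
  -- Step 1 : pull out the operator norm of t
  have step1 : (∑ j, ‖t (A fun _ => B fun _ => x j)‖ ^ p) ^ (1 / p) ≤
      ‖t‖ * (∑ j, ‖A fun _ => B fun _ => x j‖ ^ p) ^ (1 / p) := by
    have h1 : (∑ j, ‖t (A fun _ => B fun _ => x j)‖ ^ p) ≤
        ∑ j, (‖t‖ * ‖A fun _ => B fun _ => x j‖) ^ p := by
      apply Finset.sum_le_sum
      intro j _
      exact Real.rpow_le_rpow (norm_nonneg _) (t.le_opNorm _) hp.le
    calc (∑ j, ‖t (A fun _ => B fun _ => x j)‖ ^ p) ^ (1 / p)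
        ≤ (∑ j, (‖t‖ * ‖A fun _ => B fun _ => x j‖) ^ p) ^ (1 / p) :=
          Real.rpow_le_rpow
            (Finset.sum_nonneg fun j _ => Real.rpow_nonneg (norm_nonneg _) _) h1
            (one_div_nonneg.2 hp.le)
      _ = ‖t‖ * (∑ j, ‖A fun _ => B fun _ => x j‖ ^ p) ^ (1 / p) :=
          rpow_sum_factor p hp ‖t‖ (norm_nonneg t) _ (fun j => norm_nonneg _)
  -- Step 2 : the strongly p-summing hypothesis
  have step2 := hP k (fun j => B fun _ => x j)
  -- Step 3 : compare the two suprema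
  have step3 : sSup {r : ℝ | ∃ q : ContinuousMultilinearMap 𝕜 (fun _ : Fin n => E) 𝕜,
      polyNorm (fun y : E => q fun _ => y) ≤ 1 ∧
      r = (∑ j, ‖q fun _ => B fun _ => x j‖ ^ p) ^ (1 / p)} ≤ QN ^ n * sSup Sset := by
    apply Real.sSup_le
    · rintro r ⟨q, hq, rfl⟩
      by_cases hQ : QN ^ n = 0
      · have hn0 : n ≠ 0 := by
          intro hn; rw [hn, pow_zero] at hQ; exact one_ne_zero hQ
        have hQN : QN = 0 := by
          rcases pow_eq_zero_iff hn0 |>.1 hQ with h; exact h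
        have hzero : ∀ j, ‖q fun _ => B fun _ => x j‖ = 0 := by
          intro j
          have hz : ‖B fun _ => x j‖ = 0 := by
            have := diag_bound B (x j)
            rw [← hQNdef, hQN, zero_mul] at this
            exact le_antisymm this (norm_nonneg _)
          have h2 := diag_bound q (B fun _ => x j)
          rw [hz, zero_pow hn0, mul_zero] at h2
          exact le_antisymm h2 (norm_nonneg _)
        have : (∑ j, ‖q fun _ => B fun _ => x j‖ ^ p) ^ (1 / p) = 0 := by
          have hs : (∑ j, ‖q fun _ => B fun _ => x j‖ ^ p) = 0 := by
            apply Finset.sum_eq_zero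
            intro j _
            rw [hzero j, Real.zero_rpow hp.ne']
          rw [hs, Real.zero_rpow (one_div_ne_zero hp.ne')]
        rw [this, hQ, zero_mul]
      · have hQpos : 0 < QN ^ n := lt_of_le_of_ne (pow_nonneg hQN0 n) (Ne.symm hQ)
        obtain ⟨S', hS'⟩ := exists_comp n m q B
        set cs : 𝕜 := ((QN ^ n : ℝ) : 𝕜)⁻¹ with hcs
        set S : ContinuousMultilinearMap 𝕜 (fun _ : Fin (m * n) => G) 𝕜 := cs • S' with hS
        have hcsn : ‖cs‖ = (QN ^ n)⁻¹ := by
          rw [hcs, norm_inv, RCLike.norm_ofReal, abs_of_pos hQpos]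
        have hSapp : ∀ y : G, ‖S fun _ => y‖ = (QN ^ n)⁻¹ * ‖q fun _ => B fun _ => y‖ := by
          intro y
          rw [hS, ContinuousMultilinearMap.smul_apply, norm_smul, hcsn, hS' y]
        have hSnorm : polyNorm (fun y : G => S fun _ => y) ≤ 1 := by
          apply polyNorm_le _ _ zero_le_one
          intro y hy
          rw [hSapp y]
          have h1 : ‖B fun _ => y‖ ≤ QN :=
            le_polyNorm (fun y : G => B fun _ => y) ‖B‖ (diag_le_opNorm B) y hy
          have h2 : ‖q fun _ => B fun _ => y‖ ≤ QN ^ n := by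
            calc ‖q fun _ => B fun _ => y‖
                ≤ polyNorm (fun z : E => q fun _ => z) * ‖B fun _ => y‖ ^ n :=
                  diag_bound q _
              _ ≤ 1 * QN ^ n := by
                  apply mul_le_mul hq (pow_le_pow_left₀ (norm_nonneg _) h1 n)
                    (pow_nonneg (norm_nonneg _) n) zero_le_one
              _ = QN ^ n := one_mul _
          calc (QN ^ n)⁻¹ * ‖q fun _ => B fun _ => y‖ ≤ (QN ^ n)⁻¹ * QN ^ n :=
                mul_le_mul_of_nonneg_left h2 (inv_nonneg.2 hQpos.le)
            _ = 1 := inv_mul_cancel₀ hQ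
        have hrew : (∑ j, ‖q fun _ => B fun _ => x j‖ ^ p) ^ (1 / p) =
            QN ^ n * (∑ j, ‖S fun _ => x j‖ ^ p) ^ (1 / p) := by
          have h1 : ∀ j, ‖q fun _ => B fun _ => x j‖ = QN ^ n * ‖S fun _ => x j‖ := by
            intro j
            rw [hSapp (x j), ← mul_assoc, mul_inv_cancel₀ hQ, one_mul]
          calc (∑ j, ‖q fun _ => B fun _ => x j‖ ^ p) ^ (1 / p)
              = (∑ j, (QN ^ n * ‖S fun _ => x j‖) ^ p) ^ (1 / p) := by
                congr 1
                exact Finset.sum_congr rfl fun j _ => by rw [h1 j]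
            _ = QN ^ n * (∑ j, ‖S fun _ => x j‖ ^ p) ^ (1 / p) :=
                rpow_sum_factor p hp _ hQpos.le _ (fun j => norm_nonneg _)
        rw [hrew]
        apply mul_le_mul_of_nonneg_left _ hQpos.le
        exact le_csSup hSbdd ⟨S, hSnorm, rfl⟩
    · exact mul_nonneg (pow_nonneg hQN0 n) hSsup0
  calc (∑ j, ‖t (A fun _ => B fun _ => x j)‖ ^ p) ^ (1 / p)
      ≤ ‖t‖ * (∑ j, ‖A fun _ => B fun _ => x j‖ ^ p) ^ (1 / p) := step1
    _ ≤ ‖t‖ * (C * sSup {r : ℝ | ∃ q : ContinuousMultilinearMap 𝕜 (fun _ : Fin n => E) 𝕜,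
          polyNorm (fun y : E => q fun _ => y) ≤ 1 ∧
          r = (∑ j, ‖q fun _ => B fun _ => x j‖ ^ p) ^ (1 / p)}) :=
        mul_le_mul_of_nonneg_left step2 (norm_nonneg t)
    _ ≤ ‖t‖ * (C * (QN ^ n * sSup Sset)) :=
        mul_le_mul_of_nonneg_left
          (mul_le_mul_of_nonneg_left step3 hC) (norm_nonneg t)
    _ = ‖t‖ * C * QN ^ n * sSup Sset := by ring
end

section
/- Let E, F, H be Banach spaces over 𝕜, let A : Eⁿ → F be a symmetric continuous n-multilinear map (i.e. A(x_{σ(1)}, …, x_{σ(n)}) = A(x₁, …, x_n) for every permutation σ), let P(x) = A(x, …, x), and let u : H → F be a continuous linear operator such that P(B_E) ⊆ u(B_H), where B_E and B_H denote the closed unit balls. Then for all x₁, …, x_n ∈ B_E one has A(x₁, …, x_n) ∈ (nⁿ/n!) · u(B_H); that is, there exists w ∈ B_H with A(x₁, …, x_n) = (nⁿ/n!) · u(w). -/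
open Finset

section Aux

variable {𝕜 : Type*} [RCLike 𝕜] {E F : Type*}
  [NormedAddCommGroup E] [NormedSpace 𝕜 E]
  [NormedAddCommGroup F] [NormedSpace 𝕜 F]

/-- sign attached to a boolean -/
def sgAux (𝕜 : Type*) [RCLike 𝕜] (b : Bool) : 𝕜 := if b then 1 else -1

lemma sgAux_norm (𝕜 : Type*) [RCLike 𝕜] (b : Bool) : ‖sgAux 𝕜 b‖ = 1 := by
  cases b <;> simp [sgAux]

lemma card_bijective_filter (n : ℕ) :
    (Finset.univ.filter fun r : Fin n → Fin n => Function.Bijective r).card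
      = n.factorial := by
  have := (Finset.card_bij (s := (Finset.univ : Finset (Equiv.Perm (Fin n))))
    (t := Finset.univ.filter fun r : Fin n → Fin n => Function.Bijective r)
    (fun σ _ => ⇑σ)
    (fun σ _ => Finset.mem_filter.mpr ⟨Finset.mem_univ _, σ.bijective⟩)
    (fun a _ b _ h => Equiv.coe_fn_injective h)
    (fun r hr => ⟨Equiv.ofBijective r (Finset.mem_filter.mp hr).2, Finset.mem_univ _, rfl⟩))
  rw [← this, Finset.card_univ, Fintype.card_perm, Fintype.card_fin]

lemma polarizationAux (n : ℕ)
    (A : ContinuousMultilinearMap 𝕜 (fun _ : Fin n => E) F)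
    (hsym : ∀ (σ : Equiv.Perm (Fin n)) (x : Fin n → E),
      (A fun i => x (σ i)) = A x)
    (x : Fin n → E) :
    ∑ ε : Fin n → Bool, (∏ i, sgAux 𝕜 (ε i)) •
        (A fun _ => ∑ i, sgAux 𝕜 (ε i) • x i)
      = ((2 ^ n * n.factorial : ℕ) : 𝕜) • A x := by
  classical
  have expand : ∀ ε : Fin n → Bool,
      (A fun _ => ∑ i, sgAux 𝕜 (ε i) • x i)
        = ∑ r : Fin n → Fin n, (∏ j, sgAux 𝕜 (ε (r j))) • A (fun j => x (r j)) := by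
    intro ε
    rw [A.map_sum (fun (_ : Fin n) (i : Fin n) => sgAux 𝕜 (ε i) • x i)]
    exact Finset.sum_congr rfl fun r _ => A.map_smul_univ _ _
  have key : ∀ r : Fin n → Fin n,
      ∑ ε : Fin n → Bool, (∏ i, sgAux 𝕜 (ε i)) * (∏ j, sgAux 𝕜 (ε (r j)))
        = if Function.Bijective r then ((2 : 𝕜) ^ n) else 0 := by
    intro r
    have h1 : ∀ ε : Fin n → Bool,
        (∏ i, sgAux 𝕜 (ε i)) * (∏ j, sgAux 𝕜 (ε (r j)))
          = ∏ i, sgAux 𝕜 (ε i) ^ (1 + (Finset.univ.filter fun j => r j = i).card) := by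
      intro ε
      have h2 : (∏ j, sgAux 𝕜 (ε (r j)))
          = ∏ i, sgAux 𝕜 (ε i) ^ (Finset.univ.filter fun j => r j = i).card := by
        rw [← Finset.prod_fiberwise_of_maps_to' (fun j _ => Finset.mem_univ (r j))
          (fun i => sgAux 𝕜 (ε i))]
        simp [Finset.prod_const]
      rw [h2, ← Finset.prod_mul_distrib]
      exact Finset.prod_congr rfl fun i _ => by rw [pow_add, pow_one]
    simp_rw [h1]
    rw [← Fintype.prod_sum (κ := fun _ : Fin n => Bool)
      (f := fun i b => sgAux 𝕜 b ^ (1 + (Finset.univ.filter fun j => r j = i).card))]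
    by_cases hr : Function.Bijective r
    · rw [if_pos hr]
      have hfib : ∀ i, (Finset.univ.filter fun j => r j = i).card = 1 := by
        intro i
        have : (Finset.univ.filter fun j => r j = i)
            = {(Equiv.ofBijective r hr).symm i} := by
          ext j
          simp only [Finset.mem_filter, Finset.mem_univ, true_and, Finset.mem_singleton]
          constructor
          · intro h
            exact hr.injective
              (h.trans ((Equiv.ofBijective r hr).apply_symm_apply i).symm)
          · intro h; subst h; exact (Equiv.ofBijective r hr).apply_symm_apply i
        rw [this, Finset.card_singleton]
      have h3 : ∀ i ∈ (Finset.univ : Finset (Fin n)),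
          (∑ b : Bool, sgAux 𝕜 b ^ (1 + (Finset.univ.filter fun j => r j = i).card))
            = (2 : 𝕜) := by
        intro i _
        rw [hfib i]
        norm_num [Fintype.sum_bool, sgAux]
      rw [Finset.prod_congr rfl h3, Finset.prod_const, Finset.card_univ, Fintype.card_fin]
    · rw [if_neg hr]
      have hsurj : ¬ Function.Surjective r := fun h =>
        hr (Finite.surjective_iff_bijective.mp h)
      rw [Function.Surjective] at hsurj
      push_neg at hsurj
      obtain ⟨i, hi⟩ := hsurj
      refine Finset.prod_eq_zero (Finset.mem_univ i) ?_
      have h0 : (Finset.univ.filter fun j => r j = i).card = 0 := by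
        rw [Finset.card_eq_zero]
        ext j; simp only [Finset.mem_filter, Finset.mem_univ, true_and,
          Finset.notMem_empty, iff_false]
        exact hi j
      rw [h0]
      norm_num [Fintype.sum_bool, sgAux]
  simp_rw [expand, Finset.smul_sum, smul_smul]
  rw [Finset.sum_comm]
  simp_rw [← Finset.sum_smul, key]
  simp_rw [ite_smul, zero_smul]
  rw [← Finset.sum_filter]
  have hAx : ∀ r ∈ Finset.univ.filter fun r : Fin n → Fin n => Function.Bijective r,
      ((2:𝕜)^n) • A (fun j => x (r j)) = ((2:𝕜)^n) • A x := by
    intro r hr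
    have hr' := (Finset.mem_filter.mp hr).2
    rw [← hsym (Equiv.ofBijective r hr') x]
    rfl
  rw [Finset.sum_congr rfl hAx, Finset.sum_const, card_bijective_filter]
  rw [← Nat.cast_smul_eq_nsmul 𝕜, smul_smul]
  push_cast
  ring_nf

end Aux

/-- **Polarization containment.** Let `A : Eⁿ → F` be a symmetric continuous `n`-multilinear
map with diagonal `P(x) = A(x, …, x)`, and let `u : H → F` be a continuous linear operator
with `P(B_E) ⊆ u(B_H)`. Then for all `x₁, …, xₙ` in the closed unit ball of `E`,
`A(x₁, …, xₙ) ∈ (nⁿ/n!) · u(B_H)`. -/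
theorem symmetric_multilinear_mem_scaled_image
    {𝕜 : Type*} [RCLike 𝕜] {E F H : Type*}
    [NormedAddCommGroup E] [NormedSpace 𝕜 E] [CompleteSpace E]
    [NormedAddCommGroup F] [NormedSpace 𝕜 F] [CompleteSpace F]
    [NormedAddCommGroup H] [NormedSpace 𝕜 H] [CompleteSpace H]
    (n : ℕ)
    (A : ContinuousMultilinearMap 𝕜 (fun _ : Fin n => E) F)
    (hsym : ∀ (σ : Equiv.Perm (Fin n)) (x : Fin n → E),
      (A fun i => x (σ i)) = A x)
    (u : H →L[𝕜] F)
    (hPu : (fun x : E => A fun _ => x) '' Metric.closedBall (0 : E) 1 ⊆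
      u '' Metric.closedBall (0 : H) 1) :
    ∀ x : Fin n → E, (∀ i, ‖x i‖ ≤ 1) →
      ∃ w : H, ‖w‖ ≤ 1 ∧
        A x = (((n : 𝕜) ^ n / (n.factorial : 𝕜))) • u w := by
  classical
  intro x hx
  rcases Nat.eq_zero_or_pos n with hn | hn
  · subst hn
    obtain ⟨w, hw, hweq⟩ := hPu ⟨0, by simp, rfl⟩
    refine ⟨w, by simpa using Metric.mem_closedBall.mp hw, ?_⟩
    have hxe : x = fun _ => (0 : E) := Subsingleton.elim _ _
    have hweq' : u w = A fun _ => (0 : E) := hweq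
    rw [hxe, ← hweq']
    norm_num
  have hkn : ((n : 𝕜)) ≠ 0 := Nat.cast_ne_zero.mpr hn.ne'
  have hrn : ((n : ℝ)) ≠ 0 := Nat.cast_ne_zero.mpr hn.ne'
  have hz : ∀ ε : Fin n → Bool,
      ((n : 𝕜)⁻¹ • ∑ i, sgAux 𝕜 (ε i) • x i) ∈ Metric.closedBall (0 : E) 1 := by
    intro ε
    rw [Metric.mem_closedBall, dist_zero_right, norm_smul, norm_inv, RCLike.norm_natCast]
    have hzn : ‖∑ i, sgAux 𝕜 (ε i) • x i‖ ≤ n := by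
      refine (norm_sum_le _ _).trans ?_
      calc ∑ i, ‖sgAux 𝕜 (ε i) • x i‖ ≤ ∑ _i : Fin n, (1 : ℝ) :=
            Finset.sum_le_sum fun i _ => by
              rw [norm_smul, sgAux_norm, one_mul]; exact hx i
        _ = n := by simp
    calc (n : ℝ)⁻¹ * ‖∑ i, sgAux 𝕜 (ε i) • x i‖ ≤ (n : ℝ)⁻¹ * n := by
          gcongr
      _ = 1 := inv_mul_cancel₀ hrn
  choose w hw hweq using fun ε : Fin n → Bool => hPu ⟨_, hz ε, rfl⟩
  have hA : ∀ ε : Fin n → Bool,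
      (A fun _ => ∑ i, sgAux 𝕜 (ε i) • x i) = ((n : 𝕜) ^ n) • u (w ε) := by
    intro ε
    rw [hweq ε]
    have he : (fun _ : Fin n => ∑ i, sgAux 𝕜 (ε i) • x i)
        = fun _ : Fin n => (n : 𝕜) • ((n : 𝕜)⁻¹ • ∑ i, sgAux 𝕜 (ε i) • x i) := by
      funext j
      rw [smul_inv_smul₀ hkn]
    rw [he, A.map_smul_univ (fun _ => (n : 𝕜))]
    simp
  have hpol := polarizationAux n A hsym x
  simp_rw [hA, smul_smul, fun c : 𝕜 => mul_comm c ((n : 𝕜) ^ n), ← smul_smul,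
    ← Finset.smul_sum] at hpol
  set S : F := ∑ ε : Fin n → Bool, (∏ i, sgAux 𝕜 (ε i)) • u (w ε) with hS
  have hne : ((2 ^ n * n.factorial : ℕ) : 𝕜) ≠ 0 :=
    Nat.cast_ne_zero.mpr (by positivity)
  have hAx : A x = ((2 ^ n * n.factorial : ℕ) : 𝕜)⁻¹ • ((n : 𝕜) ^ n • S) := by
    rw [hpol, inv_smul_smul₀ hne]
  refine ⟨((2 : 𝕜) ^ n)⁻¹ • ∑ ε : Fin n → Bool, (∏ i, sgAux 𝕜 (ε i)) • w ε, ?_, ?_⟩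
  · rw [norm_smul, norm_inv, norm_pow, RCLike.norm_ofNat]
    have h1 : ‖∑ ε : Fin n → Bool, (∏ i, sgAux 𝕜 (ε i)) • w ε‖ ≤ (2 : ℝ) ^ n := by
      refine (norm_sum_le _ _).trans ?_
      calc ∑ ε : Fin n → Bool, ‖(∏ i, sgAux 𝕜 (ε i)) • w ε‖
          ≤ ∑ _ε : Fin n → Bool, (1 : ℝ) := by
            refine Finset.sum_le_sum fun ε _ => ?_
            rw [norm_smul, norm_prod]
            simp only [sgAux_norm, Finset.prod_const_one, one_mul]
            simpa using Metric.mem_closedBall.mp (hw ε)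
        _ = (2 : ℝ) ^ n := by
            simp [Finset.card_univ]
    calc ((2 : ℝ) ^ n)⁻¹ * ‖∑ ε : Fin n → Bool, (∏ i, sgAux 𝕜 (ε i)) • w ε‖
        ≤ ((2 : ℝ) ^ n)⁻¹ * (2 : ℝ) ^ n := by gcongr
      _ = 1 := inv_mul_cancel₀ (by positivity)
  · have huW : u (((2 : 𝕜) ^ n)⁻¹ • ∑ ε : Fin n → Bool, (∏ i, sgAux 𝕜 (ε i)) • w ε)
        = ((2 : 𝕜) ^ n)⁻¹ • S := by
      rw [map_smul, map_sum]
      simp [hS]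
    rw [huW, hAx, smul_smul, smul_smul]
    congr 1
    have h2 : ((2 : 𝕜) ^ n) ≠ 0 := pow_ne_zero _ two_ne_zero
    have hf : ((n.factorial : 𝕜)) ≠ 0 := Nat.cast_ne_zero.mpr n.factorial_ne_zero
    push_cast
    field_simp
end

section
/- Let E, F, G, H, H₁ be Banach spaces over 𝕜. Let P : E → F be a continuous n-homogeneous polynomial, u : H → F a continuous linear operator with P(B_E) ⊆ u(B_H), let Q : G → E be a continuous m-homogeneous polynomial and t : F → H₁ a continuous linear operator. Then (t ∘ P ∘ Q)(B_G) ⊆ ‖Q‖ⁿ · (t ∘ u)(B_H); that is, the (mn)-homogeneous polynomial t ∘ P ∘ Q maps the closed unit ball of G into the image of the closed unit ball of H under the continuous linear operator ‖Q‖ⁿ · (t ∘ u). (This is the hyper-ideal property of the class of 𝓘-bounded polynomials.) -/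
/-- **Hyper-ideal property of `𝓘`-bounded polynomials.** Let `P(x) = A(x, …, x)` be a
continuous `n`-homogeneous polynomial `E → F` and `u : H → F` a continuous linear operator
with `P(B_E) ⊆ u(B_H)`. For every continuous `m`-homogeneous polynomial `Q(x) = B(x, …, x)`
from `G` to `E` and every continuous linear operator `t : F → H₁`, the `(m·n)`-homogeneous
polynomial `t ∘ P ∘ Q` maps the closed unit ball of `G` into `‖Q‖ⁿ · (t ∘ u)(B_H)`. -/
theorem I_bounded_polynomials_hyper_ideal
    {𝕜 : Type*} [RCLike 𝕜] {E F G H H₁ : Type*}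
    [NormedAddCommGroup E] [NormedSpace 𝕜 E] [CompleteSpace E]
    [NormedAddCommGroup F] [NormedSpace 𝕜 F] [CompleteSpace F]
    [NormedAddCommGroup G] [NormedSpace 𝕜 G] [CompleteSpace G]
    [NormedAddCommGroup H] [NormedSpace 𝕜 H] [CompleteSpace H]
    [NormedAddCommGroup H₁] [NormedSpace 𝕜 H₁] [CompleteSpace H₁]
    (n m : ℕ)
    (A : ContinuousMultilinearMap 𝕜 (fun _ : Fin n => E) F)
    (B : ContinuousMultilinearMap 𝕜 (fun _ : Fin m => G) E)
    (u : H →L[𝕜] F) (t : F →L[𝕜] H₁)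
    (hPu : (fun x : E => A fun _ => x) '' Metric.closedBall (0 : E) 1 ⊆
      u '' Metric.closedBall (0 : H) 1) :
    ∀ x ∈ Metric.closedBall (0 : G) 1,
      ∃ w ∈ Metric.closedBall (0 : H) 1,
        t (A fun _ => B fun _ => x) =
          ((polyNorm (fun y : G => B fun _ => y) : 𝕜) ^ n) • t (u w) := by
  intro x hx
  set Q : G → E := fun y => B fun _ => y with hQdef
  set c : ℝ := polyNorm Q with hc
  have hxnorm : ‖x‖ ≤ 1 := by simpa using hx
  have hbdd : BddAbove (Set.range fun z : Metric.closedBall (0 : G) 1 => ‖Q z.1‖) := by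
    refine ⟨‖B‖, ?_⟩
    rintro r ⟨z, rfl⟩
    have hz : ‖z.1‖ ≤ 1 := by exact mem_closedBall_zero_iff.1 z.2
    calc ‖Q z.1‖ ≤ ‖B‖ * ∏ _i : Fin m, ‖z.1‖ := B.le_opNorm _
      _ ≤ ‖B‖ * 1 := by
          refine mul_le_mul_of_nonneg_left ?_ (norm_nonneg _)
          simp only [Finset.prod_const, Finset.card_univ, Fintype.card_fin]
          exact pow_le_one₀ (norm_nonneg _) hz
      _ = ‖B‖ := mul_one _
  have hQx : ‖Q x‖ ≤ c := le_ciSup hbdd ⟨x, hx⟩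
  have hc0 : 0 ≤ c := (norm_nonneg _).trans (le_ciSup hbdd ⟨0, by simp⟩)
  obtain ⟨y, hy1, hy2⟩ : ∃ y : E, ‖y‖ ≤ 1 ∧ Q x = (c : 𝕜) • y := by
    by_cases h : c = 0
    · have h0 : Q x = 0 := norm_le_zero_iff.1 (h ▸ hQx)
      exact ⟨0, by simp, by simp [h0]⟩
    · have hcpos : 0 < c := lt_of_le_of_ne hc0 (Ne.symm h)
      refine ⟨(c : 𝕜)⁻¹ • Q x, ?_, ?_⟩
      · rw [norm_smul, norm_inv, RCLike.norm_ofReal, abs_of_pos hcpos]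
        rw [inv_mul_le_iff₀ hcpos, mul_one]
        exact hQx
      · rw [smul_smul, mul_inv_cancel₀ (by exact_mod_cast h), one_smul]
  have hA : (A fun _ => Q x) = ((c : 𝕜) ^ n) • A fun _ => y := by
    rw [hy2]
    have := A.toMultilinearMap.map_smul_univ (fun _ : Fin n => (c : 𝕜)) (fun _ => y)
    simpa using this
  obtain ⟨w, hw, hw2⟩ := hPu ⟨y, by simpa using hy1, rfl⟩
  refine ⟨w, hw, ?_⟩
  rw [show (A fun _ => B fun _ => x) = (A fun _ => Q x) from rfl, hA, map_smul, hw2]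
end
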